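/- Let (X, Y) be supplementary difference sets over Z_v with parameters (v; r, s; λ) such that v = 2n + 1 where n = r + s − λ. Then the 2v × 2v block matrix [[C_X, C_Y], [−C_Y^T, C_X^T]] is a {+1, −1} matrix whose determinant has absolute value 2^v (2v−1)(v−1)^{v−1}, i.e., it is a D-optimal design of order 2v of two-circulant type. -/

import Mathlib

open Finset Matrix

/-- The number of ordered pairs `(a, b)` with `a, b ∈ X` and `a − b = c` in `ZMod v`. -/
def diffCount (v : ℕ) (X : Finset (ZMod v)) (c : ZMod v) : ℕ :=
  ((X ×ˢ X).filter (fun p => p.1 - p.2 = c)).card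

/-- The circulant ±1 matrix associated to `X ⊆ ZMod v`: its `(j,k)` entry is
`−1` if `k − j ∈ X` and `+1` otherwise. -/
def circ (v : ℕ) (X : Finset (ZMod v)) : Matrix (ZMod v) (ZMod v) ℤ :=
  fun j k => if k - j ∈ X then -1 else 1

/-!
Since circulant matrices commute with each other and with their transposes, the matrix
`A = [[C_X, C_Y], [-C_Yᵀ, C_Xᵀ]]` satisfies `A Aᵀ = diag(G, G)` with `G = C_X C_Xᵀ + C_Y C_Yᵀ`.
The `(j, k)` entry of `C_X C_Xᵀ` is the periodic autocorrelation `v - 4|X| + 4 · #{a - b = k - j}`,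
so the SDS condition together with `v = 2(r + s - λ) + 1` gives `G = 2(v - 1) I + 2 J`, whose
determinant is `2^v (2v - 1) (v - 1)^(v - 1)`. Hence `(det A)^2 = (det G)^2`.
-/

theorem Matrix.det_scalar_add_const {n R : Type*} [Fintype n] [DecidableEq n] [Nonempty n]
    [CommRing R] (a b : R) :
    det (scalar n a + of fun _ _ => b) = a ^ (Fintype.card n - 1) * (a + Fintype.card n * b) := by
  -- the constant matrix is `-(u wᵀ)`, and `charpoly (u wᵀ) = X ^ (n - 1) * charpoly (wᵀ u)`
  set u : n → R := fun _ => -b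
  set w : n → R := fun _ => 1
  have hconst : (of fun _ _ => b : Matrix n n R) = -(replicateCol Unit u * replicateRow Unit w) := by
    ext i j; simp [u, w, mul_apply]
  have hcharpoly := congrArg (Polynomial.eval a) <| charpoly_mul_comm_of_le (replicateCol Unit u)
    (replicateRow Unit w) (by rw [Fintype.card_unit]; exact Fintype.card_pos)
  rw [eval_charpoly, Polynomial.eval_mul, Polynomial.eval_pow, Polynomial.eval_X, eval_charpoly,
    det_unique (scalar Unit a - _)] at hcharpoly
  rw [hconst, ← sub_eq_add_neg, hcharpoly]
  simp [u, w, mul_apply]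

theorem Matrix.fromBlocks_mul_transpose_of_commute {n R : Type*} [Fintype n] [CommRing R]
    {C D : Matrix n n R} (hCD : Commute C D) (hC : Commute C Cᵀ) (hD : Commute D Dᵀ) :
    fromBlocks C D (-Dᵀ) Cᵀ * (fromBlocks C D (-Dᵀ) Cᵀ)ᵀ =
      fromBlocks (C * Cᵀ + D * Dᵀ) 0 0 (C * Cᵀ + D * Dᵀ) := by
  simp only [fromBlocks_transpose, transpose_neg, transpose_transpose, fromBlocks_multiply,
    Matrix.mul_neg, Matrix.neg_mul, neg_neg]
  congr 1
  · rw [hCD.eq, neg_add_cancel]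
  · rw [← transpose_mul, ← transpose_mul, hCD.eq, neg_add_cancel]
  · rw [← hC.eq, ← hD.eq, add_comm]

section Circulant

variable {v : ℕ}

theorem circ_apply_eq_one_or_neg_one (X : Finset (ZMod v)) (j k : ZMod v) :
    circ v X j k = 1 ∨ circ v X j k = -1 := by
  unfold circ
  split <;> simp

theorem circ_eq_circulant (X : Finset (ZMod v)) :
    circ v X = circulant fun c => if -c ∈ X then -1 else 1 := by
  ext j k
  rw [circulant_apply, neg_sub]
  rfl

theorem diffCount_zero (X : Finset (ZMod v)) : diffCount v X 0 = X.card := by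
  rw [diffCount, ← diag_card X]
  congr 1
  ext ⟨a, b⟩
  simp only [mem_filter, mem_product, mem_diag, sub_eq_zero]
  constructor
  · rintro ⟨⟨ha, -⟩, rfl⟩; exact ⟨ha, rfl⟩
  · rintro ⟨ha, rfl⟩; exact ⟨⟨ha, ha⟩, rfl⟩

variable [NeZero v]

theorem commute_circ (X Y : Finset (ZMod v)) : Commute (circ v X) (circ v Y) := by
  rw [circ_eq_circulant, circ_eq_circulant]
  exact circulant_mul_comm _ _

theorem commute_circ_transpose (X : Finset (ZMod v)) : Commute (circ v X) (circ v X)ᵀ := by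
  rw [circ_eq_circulant, transpose_circulant]
  exact circulant_mul_comm _ _

theorem sum_indicator_sub (X : Finset (ZMod v)) (j : ZMod v) :
    ∑ i, (if i - j ∈ X then (1 : ℤ) else 0) = X.card := by
  calc ∑ i, (if i - j ∈ X then (1 : ℤ) else 0) = ∑ c, if c ∈ X then (1 : ℤ) else 0 :=
        Fintype.sum_equiv (Equiv.subRight j) _ _ fun _ => rfl
    _ = X.card := by simp

theorem sum_indicator_sub_mul (X : Finset (ZMod v)) (j k : ZMod v) :
    ∑ i, (if i - j ∈ X then (1 : ℤ) else 0) * (if i - k ∈ X then 1 else 0) =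
      diffCount v X (k - j) := by
  simp only [ite_zero_mul_ite_zero, mul_one, sum_boole, diffCount, Nat.cast_inj]
  apply card_nbij' (fun i => (i - j, i - k)) (fun p => p.1 + j)
  · intro i hi
    simp only [coe_filter, mem_univ, true_and, Set.mem_ofPred_eq, mem_product] at hi ⊢
    exact ⟨hi, by ring⟩
  · rintro ⟨a, b⟩ hab
    simp only [coe_filter, mem_product, Set.mem_ofPred_eq, mem_univ, true_and] at hab ⊢
    obtain ⟨⟨ha, hb⟩, hab⟩ := hab
    refine ⟨by simpa using ha, ?_⟩
    convert hb using 1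
    linear_combination hab
  · intro i _
    simp
  · rintro ⟨a, b⟩ hab
    simp only [coe_filter, mem_product, Set.mem_ofPred_eq] at hab
    ext
    · simp
    · simp only
      linear_combination hab.2

theorem circ_mul_transpose_apply (X : Finset (ZMod v)) (j k : ZMod v) :
    (circ v X * (circ v X)ᵀ) j k = v - 4 * X.card + 4 * diffCount v X (k - j) := by
  have hpt : ∀ i : ZMod v, circ v X j i * circ v X k i =
      1 - 2 * (if i - j ∈ X then 1 else 0) - 2 * (if i - k ∈ X then 1 else 0)
        + 4 * ((if i - j ∈ X then 1 else 0) * (if i - k ∈ X then 1 else 0)) := by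
    intro i; unfold circ; split_ifs <;> norm_num
  simp only [mul_apply, transpose_apply, hpt, sum_add_distrib, sum_sub_distrib, ← mul_sum,
    sum_indicator_sub, sum_indicator_sub_mul, sum_const, card_univ, ZMod.card, nsmul_one]
  ring

theorem circ_gram_add_eq_of_sds {r s lam : ℕ} {X Y : Finset (ZMod v)}
    (hX : X.card = r) (hY : Y.card = s)
    (hsds : ∀ c : ZMod v, c ≠ 0 → diffCount v X c + diffCount v Y c = lam)
    (hv : v + 2 * lam = 2 * (r + s) + 1) :
    circ v X * (circ v X)ᵀ + circ v Y * (circ v Y)ᵀ =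
      scalar (ZMod v) (2 * ((v : ℤ) - 1)) + of fun _ _ => 2 := by
  ext j k
  rw [Matrix.add_apply, Matrix.add_apply, circ_mul_transpose_apply, circ_mul_transpose_apply,
    scalar_apply, of_apply, diagonal_apply]
  obtain rfl | hjk := eq_or_ne j k
  · rw [sub_self, diffCount_zero, diffCount_zero, if_pos rfl]
    ring
  · have := hsds (k - j) (sub_ne_zero.mpr hjk.symm)
    rw [if_neg hjk]
    omega

end Circulant

theorem doptimal_design_of_sds (v : ℕ) [NeZero v] (r s lam : ℕ)
    (X Y : Finset (ZMod v))
    (hX : X.card = r) (hY : Y.card = s)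
    (hsds : ∀ c : ZMod v, c ≠ 0 → diffCount v X c + diffCount v Y c = lam)
    (hv : v + 2 * lam = 2 * (r + s) + 1)
    (A : Matrix (ZMod v ⊕ ZMod v) (ZMod v ⊕ ZMod v) ℤ)
    (hA : A = Matrix.fromBlocks (circ v X) (circ v Y) (-(circ v Y)ᵀ) (circ v X)ᵀ) :
    (∀ i j, A i j = 1 ∨ A i j = -1) ∧
      A.det.natAbs = 2 ^ v * (2 * v - 1) * (v - 1) ^ (v - 1) := by
  subst hA
  refine ⟨?_, ?_⟩
  · rintro (j | j) (k | k)
    · exact circ_apply_eq_one_or_neg_one X j k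
    · exact circ_apply_eq_one_or_neg_one Y j k
    · simpa [or_comm, neg_eq_iff_eq_neg] using circ_apply_eq_one_or_neg_one Y k j
    · exact circ_apply_eq_one_or_neg_one X k j
  · have hgram := fromBlocks_mul_transpose_of_commute (commute_circ X Y)
      (commute_circ_transpose X) (commute_circ_transpose Y)
    rw [circ_gram_add_eq_of_sds hX hY hsds hv] at hgram
    have hdet := congrArg det hgram
    rw [det_mul, det_transpose, det_fromBlocks_zero₂₁, det_scalar_add_const, ZMod.card] at hdet
    obtain ⟨w, rfl⟩ : ∃ w, v = w + 1 := Nat.exists_eq_add_one.mpr (Nat.pos_of_neZero v)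
    rw [← Int.natAbs_natCast (2 ^ _ * _ * _), Int.natAbs_eq_iff_mul_self_eq, hdet]
    push_cast [Nat.add_sub_cancel, show 2 * (w + 1) - 1 = 2 * w + 1 by omega]
    ring
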